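/- Let δ be a locally nilpotent derivation of an integral domain R of characteristic 0, and let f, g ∈ R with f·g ∈ ker δ \ {0}. Then f ∈ ker δ and g ∈ ker δ, i.e., the kernel of a locally nilpotent derivation of a domain is factorially closed. -/

import Mathlib

/-!
Let `d(x)` be the largest `k` with `δ^[k] x ≠ 0`. By the general Leibniz rule, in
`δ^[d(f) + d(g)] (f * g)` every term but one vanishes, leaving
`choose (d(f) + d(g)) (d(f)) • (δ^[d(f)] f * δ^[d(g)] g)`, which is nonzero in a domain of
characteristic zero. As `δ (f * g) = 0`, this forces `d(f) + d(g) = 0`.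
-/

open Finset

namespace Derivation

variable {R A : Type*} [CommSemiring R] [CommSemiring A] [Algebra R A] (D : Derivation R A A)

theorem iterate_map_mul (n : ℕ) (a b : A) :
    D^[n] (a * b) = ∑ ij ∈ antidiagonal n, n.choose ij.1 • (D^[ij.1] a * D^[ij.2] b) := by
  induction n with
  | zero => simp
  | succ n ih =>
    rw [sum_antidiagonal_choose_succ_nsmul (fun i j => D^[i] a * D^[j] b) n]
    simp only [Function.iterate_succ_apply', ih, map_sum, map_nsmul, leibniz, smul_eq_mul,
      smul_add, sum_add_distrib]
    congr 1
    refine sum_congr rfl fun ⟨i, j⟩ hij => ?_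
    rw [n.choose_symm_of_eq_add (mem_antidiagonal.1 hij).symm, mul_comm]

theorem iterate_eq_zero_of_le {a : A} {k m : ℕ} (ha : D^[k] a = 0) (hkm : k ≤ m) :
    D^[m] a = 0 := by
  obtain ⟨l, rfl⟩ := Nat.exists_eq_add_of_le hkm
  rw [add_comm, Function.iterate_add_apply, ha, iterate_map_zero]

theorem iterate_add_map_mul_of_iterate_succ_eq_zero {a b : A} {m n : ℕ}
    (ha : D^[m + 1] a = 0) (hb : D^[n + 1] b = 0) :
    D^[m + n] (a * b) = (m + n).choose m • (D^[m] a * D^[n] b) := by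
  rw [iterate_map_mul, sum_eq_single ⟨m, n⟩]
  · rintro ⟨i, j⟩ hij hne
    have hsum : i + j = m + n := mem_antidiagonal.1 hij
    rcases Nat.lt_or_ge m i with hi | hi
    · rw [D.iterate_eq_zero_of_le ha hi, zero_mul, smul_zero]
    · have hj : n + 1 ≤ j := by
        by_contra! hj
        exact hne (Prod.ext (by omega) (by omega))
      rw [D.iterate_eq_zero_of_le hb hj, mul_zero, smul_zero]
  · exact fun h => absurd (mem_antidiagonal.2 (rfl : m + n = m + n)) h

theorem exists_iterate_ne_zero_iterate_succ_eq_zero {a : A} (ha : a ≠ 0)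
    (hnil : ∃ k, D^[k] a = 0) : ∃ d, D^[d] a ≠ 0 ∧ D^[d + 1] a = 0 := by
  classical
  have hpos : Nat.find hnil ≠ 0 := fun h => ha (by simpa [h] using Nat.find_spec hnil)
  obtain ⟨d, hd⟩ := Nat.exists_eq_succ_of_ne_zero hpos
  exact ⟨d, Nat.find_min hnil (by omega), by simpa [hd] using Nat.find_spec hnil⟩

end Derivation

theorem stmt_16 {R : Type*} [CommRing R] [IsDomain R] [CharZero R]
    (δ : Derivation ℤ R R) (hln : ∀ f : R, ∃ k : ℕ, (⇑δ)^[k] f = 0)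
    (f g : R) (hfg0 : f * g ≠ 0) (hker : δ (f * g) = 0) :
    δ f = 0 ∧ δ g = 0 := by
  obtain ⟨m, hfm, hfm'⟩ :=
    δ.exists_iterate_ne_zero_iterate_succ_eq_zero (left_ne_zero_of_mul hfg0) (hln f)
  obtain ⟨n, hgn, hgn'⟩ :=
    δ.exists_iterate_ne_zero_iterate_succ_eq_zero (right_ne_zero_of_mul hfg0) (hln g)
  have htop : δ^[m + n] (f * g) ≠ 0 := by
    rw [δ.iterate_add_map_mul_of_iterate_succ_eq_zero hfm' hgn']
    exact smul_ne_zero (Nat.choose_pos (Nat.le_add_right m n)).ne' (mul_ne_zero hfm hgn)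
  have hmn : m + n = 0 := by
    by_contra h
    obtain ⟨k, hk⟩ := Nat.exists_eq_succ_of_ne_zero h
    exact htop (by rw [hk, Function.iterate_succ_apply, hker, iterate_map_zero])
  obtain ⟨rfl, rfl⟩ := Nat.add_eq_zero_iff.mp hmn
  exact ⟨hfm', hgn'⟩
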